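/- For ξ ∈ ℝ³ with ξ ≠ 0, the Hessian matrix of the map ξ ↦ ξ₃/|ξ| has rank at least 2. -/

import Mathlib

noncomputable def pd (f : (Fin 3 → ℝ) → ℝ) (x : Fin 3 → ℝ) (k : Fin 3) : ℝ :=
  fderiv ℝ f x (Pi.single k 1)

noncomputable def hess (f : (Fin 3 → ℝ) → ℝ) (x : Fin 3 → ℝ) : Matrix (Fin 3) (Fin 3) ℝ :=
  Matrix.of fun k l => pd (fun y => pd f y l) x k

noncomputable def nrm (ξ : Fin 3 → ℝ) : ℝ := Real.sqrt (ξ 0 ^ 2 + ξ 1 ^ 2 + ξ 2 ^ 2)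

open ContinuousLinearMap in
noncomputable def LQ3 (y : Fin 3 → ℝ) : (Fin 3 → ℝ) →L[ℝ] ℝ :=
  (2 * y 0) • proj 0 + (2 * y 1) • proj 1 + (2 * y 2) • proj 2

noncomputable def Qf (y : Fin 3 → ℝ) : ℝ := y 0 ^ 2 + y 1 ^ 2 + y 2 ^ 2

lemma hQ3 (y : Fin 3 → ℝ) : HasFDerivAt Qf (LQ3 y) y := by
  have h : ∀ i : Fin 3, HasFDerivAt (fun y : Fin 3 → ℝ => y i ^ 2)
      ((2 * y i) • ContinuousLinearMap.proj (R := ℝ) (φ := fun _ : Fin 3 => ℝ) i) y := by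
    intro i
    have h1 : HasFDerivAt (fun y : Fin 3 → ℝ => y i)
        (ContinuousLinearMap.proj (R := ℝ) (φ := fun _ : Fin 3 => ℝ) i) y :=
      hasFDerivAt_apply i y
    have := h1.fun_mul h1
    have e : (2 * y i) • ContinuousLinearMap.proj (R := ℝ) (φ := fun _ : Fin 3 => ℝ) i
        = y i • ContinuousLinearMap.proj i + y i • ContinuousLinearMap.proj i := by
      rw [two_mul, add_smul]
    rw [e]
    simpa only [pow_two] using this
  exact ((h 0).add (h 1)).add (h 2)

lemma LQ3_apply (y : Fin 3 → ℝ) (k : Fin 3) : LQ3 y (Pi.single k 1) = 2 * y k := by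
  fin_cases k <;>
    simp [LQ3, Pi.single_apply]

lemma Qf_nonneg (y : Fin 3 → ℝ) : 0 ≤ Qf y := by unfold Qf; positivity

lemma f_eq : (fun x : Fin 3 → ℝ => x 2 / nrm x) = fun y => y 2 * Qf y ^ (-(1:ℝ)/2) := by
  funext y
  rw [show nrm y = Real.sqrt (Qf y) from rfl, div_eq_mul_inv, Real.sqrt_eq_rpow,
    ← Real.rpow_neg (Qf_nonneg y)]
  norm_num

lemma pd_f (y : Fin 3 → ℝ) (hy : Qf y ≠ 0) (l : Fin 3) :
    pd (fun x => x 2 / nrm x) y l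
      = (if l = 2 then (1:ℝ) else 0) * Qf y ^ (-(1:ℝ)/2) - y 2 * y l * Qf y ^ (-(3:ℝ)/2) := by
  have hpow : HasFDerivAt (fun y => Qf y ^ (-(1:ℝ)/2))
      (((-(1:ℝ)/2) * Qf y ^ ((-(1:ℝ)/2) - 1)) • LQ3 y) y := (hQ3 y).rpow_const (Or.inl hy)
  have h2 : HasFDerivAt (fun y : Fin 3 → ℝ => y 2)
      (ContinuousLinearMap.proj (R := ℝ) (φ := fun _ : Fin 3 => ℝ) 2) y := hasFDerivAt_apply 2 y
  have hg := h2.fun_mul hpow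
  rw [pd, f_eq, hg.fderiv]
  rw [show (-(1:ℝ)/2) - 1 = -(3:ℝ)/2 by norm_num]
  simp only [ContinuousLinearMap.add_apply, ContinuousLinearMap.smul_apply,
    ContinuousLinearMap.proj_apply, LQ3_apply, Pi.single_apply, smul_eq_mul]
  rcases eq_or_ne l 2 with h | h
  · simp [h]; ring
  · simp [h, Ne.symm h]; ring


lemma Qf_pos (y : Fin 3 → ℝ) (hy : Qf y ≠ 0) : 0 < Qf y :=
  lt_of_le_of_ne (Qf_nonneg y) (Ne.symm hy)

set_option maxHeartbeats 2000000 in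
lemma hess_entry (ξ : Fin 3 → ℝ) (hξ : Qf ξ ≠ 0) (k l : Fin 3) :
    hess (fun x => x 2 / nrm x) ξ k l = Qf ξ ^ (-(5:ℝ)/2) *
      (3 * ξ 2 * ξ k * ξ l - Qf ξ * ((if l = 2 then ξ k else 0) + (if k = 2 then ξ l else 0)
        + (if k = l then ξ 2 else 0))) := by
  have hc : Continuous Qf := by
    unfold Qf
    exact (((continuous_apply 0).pow 2).add ((continuous_apply 1).pow 2)).add
      ((continuous_apply 2).pow 2)
  have hmem : {y : Fin 3 → ℝ | Qf y ≠ 0} ∈ nhds ξ :=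
    (isOpen_compl_singleton.preimage hc).mem_nhds hξ
  have hev : (fun y => pd (fun x => x 2 / nrm x) y l) =ᶠ[nhds ξ]
      (fun y => (if l = 2 then (1:ℝ) else 0) * Qf y ^ (-(1:ℝ)/2)
        - y 2 * y l * Qf y ^ (-(3:ℝ)/2)) :=
    Filter.eventuallyEq_of_mem hmem (fun y hy => pd_f y hy l)
  have h1 : HasFDerivAt (fun y => Qf y ^ (-(1:ℝ)/2))
      (((-(1:ℝ)/2) * Qf ξ ^ ((-(1:ℝ)/2) - 1)) • LQ3 ξ) ξ := (hQ3 ξ).rpow_const (Or.inl hξ)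
  have h3 : HasFDerivAt (fun y => Qf y ^ (-(3:ℝ)/2))
      (((-(3:ℝ)/2) * Qf ξ ^ ((-(3:ℝ)/2) - 1)) • LQ3 ξ) ξ := (hQ3 ξ).rpow_const (Or.inl hξ)
  have hA := h1.const_mul (if l = 2 then (1:ℝ) else 0)
  have hyl : HasFDerivAt (fun y : Fin 3 → ℝ => y 2 * y l)
      ((ξ 2) • ContinuousLinearMap.proj (R := ℝ) (φ := fun _ : Fin 3 => ℝ) l
        + (ξ l) • ContinuousLinearMap.proj (R := ℝ) (φ := fun _ : Fin 3 => ℝ) 2) ξ :=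
    by
    have hp : ∀ i : Fin 3, HasFDerivAt (fun y : Fin 3 → ℝ => y i)
        (ContinuousLinearMap.proj (R := ℝ) (φ := fun _ : Fin 3 => ℝ) i) ξ :=
      fun i => hasFDerivAt_apply i ξ
    exact (hp 2).mul (hp l)
  have hB := hyl.fun_mul h3
  have htot := hA.fun_sub hB
  unfold hess
  rw [Matrix.of_apply, pd, hev.fderiv_eq, htot.fderiv]
  rw [show (-(1:ℝ)/2) - 1 = -(3:ℝ)/2 by norm_num, show (-(3:ℝ)/2) - 1 = -(5:ℝ)/2 by norm_num]
  have hkey : Qf ξ ^ (-(3:ℝ)/2) = Qf ξ * Qf ξ ^ (-(5:ℝ)/2) := by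
    rw [show (-(3:ℝ)/2) = 1 + (-(5:ℝ)/2) by norm_num, Real.rpow_add (Qf_pos ξ hξ),
      Real.rpow_one]
  simp only [ContinuousLinearMap.add_apply, ContinuousLinearMap.smul_apply,
    ContinuousLinearMap.sub_apply, ContinuousLinearMap.proj_apply, LQ3_apply, Pi.single_apply,
    smul_eq_mul]
  rw [hkey]
  fin_cases k <;> fin_cases l <;> simp <;> ring

noncomputable def Mm (ξ : Fin 3 → ℝ) : Matrix (Fin 3) (Fin 3) ℝ :=
  Matrix.of fun k l => 3 * ξ 2 * ξ k * ξ l - Qf ξ * ((if l = 2 then ξ k else 0)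
    + (if k = 2 then ξ l else 0) + (if k = l then ξ 2 else 0))

lemma hess_eq (ξ : Fin 3 → ℝ) (hξ : Qf ξ ≠ 0) :
    hess (fun x => x 2 / nrm x) ξ = (Qf ξ ^ (-(5:ℝ)/2)) • Mm ξ := by
  ext k l
  rw [hess_entry ξ hξ k l]
  simp [Mm, Matrix.smul_apply]

lemma rank_smul3 (c : ℝ) (hc : c ≠ 0) (A : Matrix (Fin 3) (Fin 3) ℝ) :
    (c • A).rank = A.rank := by
  rw [Matrix.smul_eq_diagonal_mul]
  apply Matrix.rank_mul_eq_right_of_isUnit_det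
  have : (Matrix.diagonal (fun _ : Fin 3 => c)).det = c ^ 3 := by
    simp [Matrix.det_diagonal, Finset.prod_const]
  rw [this]
  exact (pow_ne_zero 3 hc).isUnit

lemma two_le_rank_of_rows (A : Matrix (Fin 3) (Fin 3) ℝ) (i j : Fin 3)
    (h : LinearIndependent ℝ ![A i, A j]) : 2 ≤ A.rank := by
  rw [Matrix.rank_eq_finrank_span_row]
  have hle : Submodule.span ℝ (Set.range ![A i, A j]) ≤ Submodule.span ℝ (Set.range A) := by
    apply Submodule.span_mono
    rintro x ⟨m, rfl⟩
    fin_cases m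
    · exact ⟨i, rfl⟩
    · exact ⟨j, rfl⟩
  have h2 := Submodule.finrank_mono hle
  rwa [finrank_span_eq_card h, Fintype.card_fin] at h2

theorem rank_hess_xi3_div_nrm (ξ : Fin 3 → ℝ) (hξ : ξ ≠ 0) :
    2 ≤ (hess (fun x => x 2 / nrm x) ξ).rank := by
  have hQ : Qf ξ ≠ 0 := by
    intro h0
    have e0 : ξ 0 = 0 := by
      have : ξ 0 ^ 2 = 0 := by unfold Qf at h0; nlinarith [sq_nonneg (ξ 1), sq_nonneg (ξ 2)]
      exact pow_eq_zero_iff two_ne_zero |>.mp this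
    have e1 : ξ 1 = 0 := by
      have : ξ 1 ^ 2 = 0 := by unfold Qf at h0; nlinarith [sq_nonneg (ξ 0), sq_nonneg (ξ 2)]
      exact pow_eq_zero_iff two_ne_zero |>.mp this
    have e2 : ξ 2 = 0 := by
      have : ξ 2 ^ 2 = 0 := by unfold Qf at h0; nlinarith [sq_nonneg (ξ 0), sq_nonneg (ξ 1)]
      exact pow_eq_zero_iff two_ne_zero |>.mp this
    apply hξ
    funext i
    fin_cases i
    · exact e0
    · exact e1
    · exact e2
  rw [hess_eq ξ hQ, rank_smul3 _ (ne_of_gt (Real.rpow_pos_of_pos (Qf_pos ξ hQ) _))]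
  by_cases h2 : ξ 2 = 0
  · by_cases h0 : ξ 0 = 0
    · have h1 : ξ 1 ≠ 0 := by intro h1; exact hQ (by simp [Qf, h0, h1, h2])
      apply two_le_rank_of_rows _ 1 2
      rw [LinearIndependent.pair_iff]
      intro s t hst
      have c1 := congrFun hst 1
      have c2 := congrFun hst 2
      simp [Mm, h2, h0] at c1 c2
      constructor <;> tauto
    · apply two_le_rank_of_rows _ 0 2
      rw [LinearIndependent.pair_iff]
      intro s t hst
      have c0 := congrFun hst 0
      have c2 := congrFun hst 2
      simp [Mm, h2, h0] at c0 c2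
      constructor <;> tauto
  · by_cases hb : ξ 0 = 0 ∧ ξ 1 = 0
    · apply two_le_rank_of_rows _ 0 1
      rw [LinearIndependent.pair_iff]
      intro s t hst
      have c0 := congrFun hst 0
      have c1 := congrFun hst 1
      simp [Mm, h2, hb.1, hb.2] at c0 c1
      constructor <;> tauto
    · have hab : ξ 0 ^ 2 + ξ 1 ^ 2 ≠ 0 := by
        rcases not_and_or.mp hb with h | h <;>
          · intro hz
            apply h
            have : ξ 0 ^ 2 = 0 ∧ ξ 1 ^ 2 = 0 := by
              constructor <;> nlinarith [sq_nonneg (ξ 0), sq_nonneg (ξ 1)]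
            first
              | exact pow_eq_zero_iff two_ne_zero |>.mp this.1
              | exact pow_eq_zero_iff two_ne_zero |>.mp this.2
      have hdet : (Mm ξ).det ≠ 0 := by
        have hd : (Mm ξ).det = ξ 2 * (ξ 0 ^ 2 + ξ 1 ^ 2) * Qf ξ ^ 3 := by
          simp [Mm, Qf, Matrix.det_fin_three]
          ring
        rw [hd]
        exact mul_ne_zero (mul_ne_zero h2 hab) (pow_ne_zero 3 hQ)
      have hr := Matrix.rank_of_isUnit (Mm ξ) ((Matrix.isUnit_iff_isUnit_det _).mpr hdet.isUnit)
      rw [hr, Fintype.card_fin]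
      norm_num
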